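/- arXiv:1104.5100 — 3 statements merged into one kernel-verified Lean document; each statement's English description precedes it below -/
import Mathlib

section
/- Let u, v > 0 be real numbers and suppose k > 2 is a real number such that |π − p/q| < 1/q^k holds for only finitely many coprime positive integers (p, q), and that u − (k−1)·v > 0. Then the sequence 1/(n^u · |sin n|^v) tends to 0 as n → ∞. -/
/-!
Finitely many exceptions to `|π - p/q| < q⁻ᵏ` give, after shrinking the constant, a bound
`c / q ^ k ≤ |π - p/q|` for all positive `p, q` (a non-reduced fraction only has a larger
denominator than its reduced form). If `m` is the natural number nearest to `n / π`, Jordan's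
inequality yields `|sin n| ≥ (2/π) |n - mπ| = (2/π) m |π - n/m| ≥ (2c/π) m^(1-k) ≥ (2c/π) n^(1-k)`.
Hence `1 / (n^u |sin n|^v) = O(n^(-(u - (k-1) v)))`, which tends to `0`.
-/

open Real Filter Topology

lemma Set.Finite.exists_pos_forall_le {α : Type*} {s : Set α} (hs : s.Finite) {f : α → ℝ}
    (hf : ∀ a ∈ s, 0 < f a) : ∃ c, 0 < c ∧ ∀ a ∈ s, c ≤ f a := by
  rcases s.eq_empty_or_nonempty with rfl | hne
  · exact ⟨1, one_pos, by simp⟩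
  · obtain ⟨a, ha, hmin⟩ := s.exists_min_image f hs hne
    exact ⟨f a, hf a ha, hmin⟩

lemma Nat.exists_coprime_div_eq {K : Type*} [Field K] [CharZero K] {p q : ℕ} (hp : 0 < p)
    (hq : 0 < q) : ∃ p' q' : ℕ, 0 < p' ∧ 0 < q' ∧ p'.Coprime q' ∧ q' ≤ q ∧
      (p : K) / q = p' / q' := by
  obtain ⟨g, p', q', hg, hco, rfl, rfl⟩ := Nat.exists_coprime' (Nat.gcd_pos_of_pos_left q hp)
  refine ⟨p', q', Nat.pos_of_mul_pos_right hp, Nat.pos_of_mul_pos_right hq, hco,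
    Nat.le_mul_of_pos_right _ hg, ?_⟩
  push_cast
  exact mul_div_mul_right _ _ (Nat.cast_ne_zero.2 hg.ne')

lemma Irrational.exists_pos_le_abs_sub_div {x k : ℝ} (hx : Irrational x) (hk : 0 ≤ k)
    (hfin : {pq : ℕ × ℕ | 0 < pq.1 ∧ 0 < pq.2 ∧ Nat.Coprime pq.1 pq.2 ∧
        |x - (pq.1 : ℝ) / (pq.2 : ℝ)| < 1 / (pq.2 : ℝ) ^ k}.Finite) :
    ∃ c, 0 < c ∧ ∀ p q : ℕ, 0 < p → 0 < q → c / (q : ℝ) ^ k ≤ |x - p / q| := by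
  have hne (p q : ℕ) : 0 < |x - p / q| := by
    simpa [sub_eq_zero] using hx.ne_rat (p / q)
  obtain ⟨c, hc, hle⟩ := hfin.exists_pos_forall_le
    (f := fun pq => |x - pq.1 / pq.2| * (pq.2 : ℝ) ^ k) fun pq hpq =>
      mul_pos (hne _ _) (by have := hpq.2.1; positivity)
  have hcop (p q : ℕ) (hp : 0 < p) (hq : 0 < q) (hpq : p.Coprime q) :
      min c 1 / (q : ℝ) ^ k ≤ |x - p / q| := by
    have hqk : 0 < (q : ℝ) ^ k := by positivity
    by_cases hlt : |x - p / q| < 1 / (q : ℝ) ^ k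
    · rw [div_le_iff₀ hqk]
      exact (min_le_left _ _).trans (hle (p, q) ⟨hp, hq, hpq, hlt⟩)
    · exact (div_le_div_of_nonneg_right (min_le_right _ _) hqk.le).trans (not_lt.1 hlt)
  refine ⟨min c 1, lt_min hc one_pos, fun p q hp hq => ?_⟩
  obtain ⟨p', q', hp', hq', hco, hq'q, heq⟩ := Nat.exists_coprime_div_eq (K := ℝ) hp hq
  calc min c 1 / (q : ℝ) ^ k ≤ min c 1 / (q' : ℝ) ^ k := by gcongr
    _ ≤ |x - p' / q'| := hcop p' q' hp' hq' hco
    _ = |x - p / q| := by rw [heq]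

lemma abs_sin_sub_nat_mul_pi (x : ℝ) (n : ℕ) : |sin (x - n * π)| = |sin x| := by
  rw [sin_sub_nat_mul_pi, abs_mul, abs_pow, abs_neg, abs_one, one_pow, one_mul]

lemma two_div_pi_mul_abs_sub_floor_le_abs_sin {x : ℝ} (hx : 0 ≤ x) :
    2 / π * |x - ⌊x / π + 1 / 2⌋₊ * π| ≤ |sin x| := by
  have hfloor := Nat.floor_le (by positivity : 0 ≤ x / π + 1 / 2)
  have hlt := Nat.lt_floor_add_one (x / π + 1 / 2)
  have hdist : |x - ⌊x / π + 1 / 2⌋₊ * π| ≤ π / 2 := by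
    have hxπ : x = x / π * π := by field_simp
    rw [abs_le]
    constructor <;> nlinarith [pi_pos]
  rw [← abs_sin_sub_nat_mul_pi x ⌊x / π + 1 / 2⌋₊]
  exact mul_abs_le_abs_sin hdist

lemma le_abs_sin_natCast {c k : ℝ} (hc : 0 ≤ c) (hk : 1 ≤ k)
    (hπ : ∀ p q : ℕ, 0 < p → 0 < q → c / (q : ℝ) ^ k ≤ |π - p / q|) {n : ℕ} (hn : 2 ≤ n) :
    2 * c / π * (n : ℝ) ^ (1 - k) ≤ |sin n| := by
  set m := ⌊(n : ℝ) / π + 1 / 2⌋₊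
  have hn' : (2 : ℝ) ≤ n := by exact_mod_cast hn
  have hnπ : (n : ℝ) / π * π = n := div_mul_cancel₀ _ pi_ne_zero
  have hm_pos : 0 < m := by
    refine Nat.floor_pos.2 ?_
    nlinarith [pi_pos, pi_lt_four]
  have hm : (0 : ℝ) < m := by exact_mod_cast hm_pos
  have hm_le : (m : ℝ) ≤ n := by
    refine (Nat.floor_le (by positivity)).trans ?_
    nlinarith [pi_gt_three]
  have hdist : |(n : ℝ) - m * π| = m * |π - n / m| := by
    rw [← abs_of_pos hm, ← abs_mul, abs_of_pos hm, ← abs_neg, mul_sub, mul_div_cancel₀ _ hm.ne']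
    ring_nf
  calc 2 * c / π * (n : ℝ) ^ (1 - k) ≤ 2 * c / π * (m : ℝ) ^ (1 - k) :=
        mul_le_mul_of_nonneg_left (rpow_le_rpow_of_nonpos hm hm_le (by linarith)) (by positivity)
    _ = 2 / π * (m * (c / (m : ℝ) ^ k)) := by rw [rpow_sub hm, rpow_one]; ring
    _ ≤ 2 / π * (m * |π - n / m|) := by have := hπ n m (by omega) hm_pos; gcongr
    _ = 2 / π * |(n : ℝ) - m * π| := by rw [hdist]
    _ ≤ |sin n| := two_div_pi_mul_abs_sub_floor_le_abs_sin n.cast_nonneg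

lemma tendsto_one_div_rpow_mul_rpow_atTop {a : ℕ → ℝ} {C e u v : ℝ} (hC : 0 < C) (hv : 0 ≤ v)
    (ha : ∀ᶠ n : ℕ in atTop, C * (n : ℝ) ^ (-e) ≤ a n) (huv : 0 < u - e * v) :
    Tendsto (fun n : ℕ => 1 / ((n : ℝ) ^ u * a n ^ v)) atTop (𝓝 0) := by
  have hlim : Tendsto (fun n : ℕ => (C ^ v)⁻¹ * (n : ℝ) ^ (-(u - e * v))) atTop (𝓝 0) := by
    simpa using ((tendsto_rpow_neg_atTop huv).comp tendsto_natCast_atTop_atTop).const_mul (C ^ v)⁻¹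
  refine squeeze_zero' ?_ ?_ hlim
  · filter_upwards [ha, eventually_gt_atTop 0] with n hn hn0
    have : 0 ≤ a n := le_trans (by positivity) hn
    positivity
  · filter_upwards [ha, eventually_gt_atTop 0] with n hn hn0
    have hn0' : (0 : ℝ) < n := by exact_mod_cast hn0
    calc 1 / ((n : ℝ) ^ u * a n ^ v) ≤ 1 / ((n : ℝ) ^ u * (C * (n : ℝ) ^ (-e)) ^ v) := by
          gcongr
      _ = (C ^ v)⁻¹ * (n : ℝ) ^ (-(u - e * v)) := by
          rw [mul_rpow hC.le (by positivity), ← rpow_mul hn0'.le, rpow_neg hn0'.le,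
            rpow_sub hn0', neg_mul, rpow_neg hn0'.le]
          field_simp

open Real Filter in
theorem seq_tendsto_zero_general (u v k : ℝ) (hv : 0 < v) (hk : 2 < k)
    (hfin : {pq : ℕ × ℕ | 0 < pq.1 ∧ 0 < pq.2 ∧ Nat.Coprime pq.1 pq.2 ∧
        |π - (pq.1 : ℝ) / (pq.2 : ℝ)| < 1 / (pq.2 : ℝ) ^ k}.Finite)
    (huv : 0 < u - (k - 1) * v) :
    Tendsto (fun n : ℕ => 1 / ((n : ℝ) ^ u * |Real.sin n| ^ v)) atTop (nhds 0) := by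
  obtain ⟨c, hc, hπ⟩ := irrational_pi.exists_pos_le_abs_sub_div (by linarith) hfin
  refine tendsto_one_div_rpow_mul_rpow_atTop (C := 2 * c / π) (by positivity) hv.le ?_ huv
  filter_upwards [eventually_ge_atTop 2] with n hn
  rw [neg_sub]
  exact le_abs_sin_natCast hc.le (by linarith) hπ hn

open Real Filter in
theorem seq_tendsto_zero (u v k : ℝ) (hu : 0 < u) (hv : 0 < v) (hk : 2 < k)
    (hfin : {pq : ℕ × ℕ | 0 < pq.1 ∧ 0 < pq.2 ∧ Nat.Coprime pq.1 pq.2 ∧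
        |π - (pq.1 : ℝ) / (pq.2 : ℝ)| < 1 / (pq.2 : ℝ) ^ k}.Finite)
    (huv : 0 < u - (k - 1) * v) :
    Tendsto (fun n : ℕ => 1 / ((n : ℝ) ^ u * |Real.sin n| ^ v)) atTop (nhds 0) :=
  seq_tendsto_zero_general u v k hv hk hfin huv
end

section
/- Let u, v > 0 and suppose k = 1 + u/v satisfies: |π − p/q| < 1/q^k for infinitely many coprime positive integers (p, q). Then the sequence a_n = 1/(n^u · |sin n|^v) diverges (does not converge to any limit), because it has a subsequence bounded below by a positive constant and a subsequence tending to 0. -/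
/-!
A good approximation `|π - p/q| < q^(-(1 + u/v))` gives `|sin p| ≤ |p - qπ| < q^(-u/v)`, and since
`p < (π + 1) q` this means `p^u |sin p|^v ≤ (π + 1)^u`: along the numerators `p` the sequence stays
above `(π + 1)^(-u)` (the denominator is nonzero because `π` is irrational). The same bound forces
`|sin p| → 0` along these `p`, hence `|sin (p + 1)| ≥ sin 1 - |sin p|` stays away from `0` while
`(p + 1)^u → ∞`, so the sequence tends to `0` along `p + 1`.
-/

open Real Filter Set Topology

theorem Real.sin_natCast_ne_zero {n : ℕ} (hn : n ≠ 0) : sin n ≠ 0 := by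
  refine sin_ne_zero_iff.2 fun m hm => ?_
  rcases eq_or_ne m 0 with rfl | hm0
  · exact hn (by simpa [eq_comm] using hm)
  · exact (irrational_pi.intCast_mul hm0).ne_nat n hm

theorem Real.abs_sin_le_abs_sub_intCast_mul_pi (x : ℝ) (q : ℤ) : |sin x| ≤ |x - q * π| := by
  calc |sin x| = |sin (x - q * π)| := by
        rw [sin_sub_int_mul_pi, abs_mul, abs_zpow, abs_neg, abs_one, one_zpow, one_mul]
    _ ≤ |x - q * π| := abs_sin_le_abs

theorem Real.abs_sin_sub_abs_sin_le (x y : ℝ) : |sin y| - |sin x| ≤ |sin (x + y)| := by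
  have hy : sin y = sin (x + y) * cos x - cos (x + y) * sin x := by
    rw [← sin_sub, add_sub_cancel_left]
  have h₁ : |sin (x + y) * cos x| ≤ |sin (x + y)| :=
    (abs_mul _ _).trans_le (mul_le_of_le_one_right (abs_nonneg _) (abs_cos_le_one x))
  have h₂ : |cos (x + y) * sin x| ≤ |sin x| :=
    (abs_mul _ _).trans_le (mul_le_of_le_one_left (abs_nonneg _) (abs_cos_le_one _))
  have := abs_sub (sin (x + y) * cos x) (cos (x + y) * sin x)
  rw [← hy] at this
  linarith

theorem Set.Infinite.image_fst_of_snd_le {T : Set (ℕ × ℕ)} (hT : T.Infinite)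
    (hle : ∀ pq ∈ T, pq.2 ≤ pq.1) : (Prod.fst '' T).Infinite := by
  intro hfin
  obtain ⟨M, hM⟩ := hfin.bddAbove
  refine hT ((finite_Iic (M, M)).subset fun pq hpq => ?_)
  have hp : pq.1 ≤ M := hM (mem_image_of_mem _ hpq)
  exact ⟨hp, (hle pq hpq).trans hp⟩

theorem abs_pi_sub_div_lt_one_of_lt {p q : ℕ} {k : ℝ} (hq : 0 < q) (hk : 0 ≤ k)
    (happ : |π - p / q| < 1 / (q : ℝ) ^ k) : |π - p / q| < 1 :=
  happ.trans_le (div_le_one_of_le₀ (one_le_rpow (by exact_mod_cast hq) hk) (by positivity))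

theorem abs_sin_lt_rpow_of_abs_pi_sub_div_lt {p q : ℕ} {k : ℝ} (hq : 0 < q)
    (happ : |π - p / q| < 1 / (q : ℝ) ^ (1 + k)) : |sin p| < (q : ℝ) ^ (-k) := by
  have hq₀ : (0 : ℝ) < q := by exact_mod_cast hq
  calc |sin p| ≤ |(p : ℝ) - (q : ℤ) * π| := abs_sin_le_abs_sub_intCast_mul_pi _ _
    _ = q * |π - p / q| := by
        rw [← abs_of_pos hq₀, ← abs_mul, abs_of_pos hq₀, abs_sub_comm, mul_sub,
          mul_div_cancel₀ _ hq₀.ne']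
        push_cast; ring_nf
    _ < q * (1 / (q : ℝ) ^ (1 + k)) := mul_lt_mul_of_pos_left happ hq₀
    _ = (q : ℝ) ^ (-k) := by
        rw [rpow_add hq₀, rpow_one, rpow_neg hq₀.le]
        field_simp

theorem lt_pi_add_one_mul_of_abs_pi_sub_div_lt_one {p q : ℕ} (hq : 0 < q)
    (happ : |π - p / q| < 1) : (p : ℝ) < (π + 1) * q := by
  have hq₀ : (0 : ℝ) < q := by exact_mod_cast hq
  have := (abs_lt.1 happ).1
  rw [← div_lt_iff₀ hq₀]
  linarith

theorem lt_of_abs_pi_sub_div_lt_one {p q : ℕ} (hq : 0 < q)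
    (happ : |π - p / q| < 1) : q < p := by
  have hq₀ : (0 : ℝ) < q := by exact_mod_cast hq
  have := (abs_lt.1 happ).2
  have : (q : ℝ) < p := by
    rw [← one_lt_div hq₀]
    linarith [pi_gt_three]
  exact_mod_cast this

theorem rpow_mul_abs_sin_rpow_le_of_abs_pi_sub_div_lt {p q : ℕ} {u v : ℝ} (hq : 0 < q)
    (hu : 0 < u) (hv : 0 < v) (happ : |π - p / q| < 1 / (q : ℝ) ^ (1 + u / v)) :
    (p : ℝ) ^ u * |sin p| ^ v ≤ (π + 1) ^ u := by
  have hq₀ : (0 : ℝ) < q := by exact_mod_cast hq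
  have hp : (p : ℝ) < (π + 1) * q := lt_pi_add_one_mul_of_abs_pi_sub_div_lt_one hq
    (abs_pi_sub_div_lt_one_of_lt hq (by positivity) happ)
  have hsin : |sin p| ^ v ≤ (q : ℝ) ^ (-u) := by
    calc |sin p| ^ v ≤ ((q : ℝ) ^ (-(u / v))) ^ v :=
          rpow_le_rpow (abs_nonneg _) (abs_sin_lt_rpow_of_abs_pi_sub_div_lt hq happ).le hv.le
      _ = (q : ℝ) ^ (-u) := by rw [← rpow_mul hq₀.le, neg_mul, div_mul_cancel₀ _ hv.ne']
  calc (p : ℝ) ^ u * |sin p| ^ v ≤ ((π + 1) * q) ^ u * (q : ℝ) ^ (-u) := by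
        gcongr
    _ = (π + 1) ^ u := by
        rw [mul_rpow (by positivity) hq₀.le, mul_assoc, ← rpow_add hq₀, add_neg_cancel,
          rpow_zero, mul_one]

theorem tendsto_zero_of_rpow_mul_rpow_le {α : Type*} {l : Filter α} {f g : α → ℝ} {u v C : ℝ}
    (hu : 0 < u) (hv : 0 < v) (hf : Tendsto f l atTop) (hg : ∀ᶠ x in l, 0 ≤ g x)
    (hC : ∀ᶠ x in l, f x ^ u * g x ^ v ≤ C) : Tendsto g l (𝓝 0) := by
  have hfu : Tendsto (fun x => f x ^ u) l atTop := (tendsto_rpow_atTop hu).comp hf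
  have hgv : Tendsto (fun x => g x ^ v) l (𝓝 0) := by
    refine squeeze_zero' (hg.mono fun x hx => rpow_nonneg hx v) ?_
      ((tendsto_const_nhds (x := C)).div_atTop hfu)
    filter_upwards [hC, hfu.eventually_gt_atTop 0] with x hx hpos
    rw [le_div_iff₀ hpos, mul_comm]
    exact hx
  have hroot := ((continuous_rpow_const (inv_nonneg.2 hv.le)).tendsto 0).comp hgv
  rw [zero_rpow (inv_ne_zero hv.ne')] at hroot
  exact hroot.congr' (hg.mono fun x hx => rpow_rpow_inv hx hv.ne')

theorem inv_le_one_div_rpow_mul_abs_sin_rpow {n : ℕ} (hn : n ≠ 0) {u v C : ℝ}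
    (h : (n : ℝ) ^ u * |sin n| ^ v ≤ C) : C⁻¹ ≤ 1 / ((n : ℝ) ^ u * |sin n| ^ v) := by
  have hpos : 0 < (n : ℝ) ^ u * |sin n| ^ v :=
    mul_pos (rpow_pos_of_pos (by positivity) u)
      (rpow_pos_of_pos (abs_pos.2 (sin_natCast_ne_zero hn)) v)
  rw [one_div]
  exact inv_anti₀ hpos h

theorem tendsto_one_div_rpow_mul_abs_sin_rpow_succ {l : Filter ℕ} (hl : l ≤ atTop) {u v C : ℝ}
    (hu : 0 < u) (hv : 0 < v) (hC : ∀ᶠ n : ℕ in l, (n : ℝ) ^ u * |sin n| ^ v ≤ C) :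
    Tendsto (fun n : ℕ => 1 / (((n + 1 : ℕ) : ℝ) ^ u * |sin ((n + 1 : ℕ) : ℝ)| ^ v)) l (𝓝 0) := by
  have hsin : Tendsto (fun n : ℕ => |sin n|) l (𝓝 0) :=
    tendsto_zero_of_rpow_mul_rpow_le hu hv (tendsto_natCast_atTop_atTop.mono_left hl)
      (Eventually.of_forall fun _ => abs_nonneg _) hC
  have hs₁ : 0 < sin 1 := sin_pos_of_pos_of_lt_pi one_pos (by linarith [pi_gt_three])
  have hlow : ∀ᶠ n : ℕ in l, sin 1 / 2 ≤ |sin ((n + 1 : ℕ) : ℝ)| := by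
    filter_upwards [hsin.eventually (gt_mem_nhds (half_pos hs₁))] with n hn
    have := abs_sin_sub_abs_sin_le n 1
    rw [abs_of_pos hs₁] at this
    push_cast
    linarith
  have hgrow : Tendsto (fun n : ℕ => ((n + 1 : ℕ) : ℝ) ^ u * (sin 1 / 2) ^ v) l atTop :=
    ((tendsto_rpow_atTop hu).comp ((tendsto_natCast_atTop_atTop.comp
      (tendsto_add_atTop_nat 1)).mono_left hl)).atTop_mul_const (by positivity)
  simp only [one_div]
  refine (tendsto_atTop_mono' l ?_ hgrow).inv_tendsto_atTop
  filter_upwards [hlow] with n hn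
  gcongr

open Real Filter in
theorem seq_diverges (u v : ℝ) (hu : 0 < u) (hv : 0 < v)
    (hinf : {pq : ℕ × ℕ | 0 < pq.1 ∧ 0 < pq.2 ∧ Nat.Coprime pq.1 pq.2 ∧
        |π - (pq.1 : ℝ) / (pq.2 : ℝ)| < 1 / (pq.2 : ℝ) ^ (1 + u / v)}.Infinite) :
    ¬ ∃ L : ℝ, Tendsto (fun n : ℕ => 1 / ((n : ℝ) ^ u * |Real.sin n| ^ v)) atTop (nhds L) := by
  rintro ⟨L, hL⟩
  set P := {n : ℕ | n ≠ 0 ∧ (n : ℝ) ^ u * |sin n| ^ v ≤ (π + 1) ^ u}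
  have hP : P.Infinite := by
    refine (hinf.image_fst_of_snd_le fun pq hpq => ?_).mono ?_
    · exact (lt_of_abs_pi_sub_div_lt_one hpq.2.1
        (abs_pi_sub_div_lt_one_of_lt hpq.2.1 (by positivity) hpq.2.2.2)).le
    · rintro _ ⟨pq, ⟨hp, hq, -, happ⟩, rfl⟩
      exact ⟨hp.ne', rpow_mul_abs_sin_rpow_le_of_abs_pi_sub_div_lt hq hu hv happ⟩
  have : (atTop ⊓ 𝓟 P).NeBot := frequently_iff_neBot.1 (Nat.frequently_atTop_iff_infinite.2 hP)
  have hL₀ : L = 0 := tendsto_nhds_unique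
    ((hL.comp (tendsto_add_atTop_nat 1)).mono_left inf_le_left)
    (tendsto_one_div_rpow_mul_abs_sin_rpow_succ inf_le_left hu hv
      (eventually_inf_principal.2 (Eventually.of_forall fun n (hn : n ∈ P) => hn.2)))
  have hLpos : ((π + 1) ^ u)⁻¹ ≤ L := ge_of_tendsto (hL.mono_left inf_le_left)
    (eventually_inf_principal.2 (Eventually.of_forall fun n (hn : n ∈ P) =>
      inv_le_one_div_rpow_mul_abs_sin_rpow hn.1 hn.2))
  have : 0 < ((π + 1) ^ u)⁻¹ := by positivity
  linarith
end

section
/- For positive reals u, v and any ε > 0, if k = μ + ε/v where μ ≥ 2 is such that |π − p/q| < 1/q^k has only finitely many coprime positive integer solutions, then 1/(n^u · |sin n|^v) = O(1/n^(u − (μ−1)v − ε)) as n → ∞. -/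
/-!
Write `k = μ + ε / v`. Since `π` is irrational, each of the finitely many exceptional fractions
is at a positive distance from `π`, so `|π - p / q| ≥ c / q ^ k` for all positive `p, q`
(reducing `p / q` to lowest terms only decreases the denominator). For `n ≥ 2` let `m ≥ 1` be
the nearest integer to `n / π`; then `|n - m π| ≤ π / 2`, and Jordan's inequality gives
`|sin n| ≥ (2 / π) |n - m π| = (2 / π) m |π - n / m| ≥ (2 / π) c m ^ (1 - k) ≥ (2 / π) c n ^ (1 - k)`,
as `m ≤ n` and `k ≥ 1`. Raising to the power `v` gives the bound.
-/

open Real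

theorem Set.Finite.exists_gt_forall_le {α β : Type*} [LinearOrder β] [NoMaxOrder β]
    {s : Set α} (hs : s.Finite) {f : α → β} {b : β} (hf : ∀ a ∈ s, b < f a) :
    ∃ δ, b < δ ∧ ∀ a ∈ s, δ ≤ f a := by
  rcases s.eq_empty_or_nonempty with rfl | hne
  · obtain ⟨δ, hδ⟩ := exists_gt b
    exact ⟨δ, hδ, by simp⟩
  · obtain ⟨a, ha, hmin⟩ := s.exists_min_image f hs hne
    exact ⟨f a, hf a ha, hmin⟩

section Approximation

variable {x k : ℝ}

theorem Irrational.exists_pos_div_rpow_le_abs_sub_div_of_coprime (hx : Irrational x)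
    (hk : 0 ≤ k)
    (hfin : {pq : ℕ × ℕ | 0 < pq.1 ∧ 0 < pq.2 ∧ Nat.Coprime pq.1 pq.2 ∧
        |x - (pq.1 : ℝ) / (pq.2 : ℝ)| < 1 / (pq.2 : ℝ) ^ k}.Finite) :
    ∃ c > 0, ∀ p q : ℕ, 0 < p → 0 < q → Nat.Coprime p q →
      c / (q : ℝ) ^ k ≤ |x - p / q| := by
  have hpos (pq : ℕ × ℕ) : 0 < |x - (pq.1 : ℝ) / (pq.2 : ℝ)| :=
    abs_pos.2 <| sub_ne_zero.2 <| by simpa using hx.ne_rat (pq.1 / pq.2 : ℚ)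
  obtain ⟨δ, hδ, hδ_le⟩ := hfin.exists_gt_forall_le fun pq _ ↦ hpos pq
  refine ⟨min δ 1, lt_min hδ one_pos, fun p q hp hq hpq ↦ ?_⟩
  have hqk : 1 ≤ (q : ℝ) ^ k := one_le_rpow (Nat.one_le_cast.2 hq) hk
  by_cases hclose : |x - p / q| < 1 / (q : ℝ) ^ k
  · calc min δ 1 / (q : ℝ) ^ k ≤ min δ 1 := div_le_self (by positivity) hqk
      _ ≤ δ := min_le_left _ _
      _ ≤ |x - p / q| := hδ_le (p, q) ⟨hp, hq, hpq, hclose⟩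
  · calc min δ 1 / (q : ℝ) ^ k ≤ 1 / (q : ℝ) ^ k := by gcongr; exact min_le_right _ _
      _ ≤ |x - p / q| := not_lt.1 hclose

theorem Irrational.exists_pos_div_rpow_le_abs_sub_div (hx : Irrational x) (hk : 0 ≤ k)
    (hfin : {pq : ℕ × ℕ | 0 < pq.1 ∧ 0 < pq.2 ∧ Nat.Coprime pq.1 pq.2 ∧
        |x - (pq.1 : ℝ) / (pq.2 : ℝ)| < 1 / (pq.2 : ℝ) ^ k}.Finite) :
    ∃ c > 0, ∀ p q : ℕ, 0 < p → 0 < q → c / (q : ℝ) ^ k ≤ |x - p / q| := by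
  obtain ⟨c, hc, hc_le⟩ := hx.exists_pos_div_rpow_le_abs_sub_div_of_coprime hk hfin
  refine ⟨c, hc, fun p q hp hq ↦ ?_⟩
  obtain ⟨g, p', q', hg, hcop, rfl, rfl⟩ := Nat.exists_coprime' (Nat.gcd_pos_of_pos_left q hp)
  have hp' : 0 < p' := Nat.pos_of_mul_pos_right hp
  have hq' : 0 < q' := Nat.pos_of_mul_pos_right hq
  calc c / ((q' * g : ℕ) : ℝ) ^ k ≤ c / (q' : ℝ) ^ k := by
        gcongr
        exact_mod_cast Nat.le_mul_of_pos_right q' hg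
    _ ≤ |x - p' / q'| := hc_le p' q' hp' hq' hcop
    _ = |x - ((p' * g : ℕ) : ℝ) / ((q' * g : ℕ) : ℝ)| := by
        push_cast
        rw [mul_div_mul_right _ _ (by positivity)]

end Approximation

theorem Real.two_div_pi_mul_abs_sub_int_mul_pi_le_abs_sin {x : ℝ} {m : ℤ}
    (h : |x - m * π| ≤ π / 2) : 2 / π * |x - m * π| ≤ |sin x| := by
  simpa [sin_sub_int_mul_pi, abs_mul, abs_pow] using mul_abs_le_abs_sin h

theorem Real.exists_nat_abs_sub_mul_pi_le {x : ℝ} (hx : π / 2 ≤ x) :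
    ∃ m : ℕ, 0 < m ∧ (m : ℝ) ≤ x ∧ |x - m * π| ≤ π / 2 := by
  have hπ : 3 < π := pi_gt_three
  obtain ⟨y, rfl⟩ : ∃ y, x = y * π := ⟨x / π, (div_mul_cancel₀ x pi_ne_zero).symm⟩
  have hy : 1 / 2 ≤ y := le_of_mul_le_mul_right (by linarith) pi_pos
  have hfloor_le : (⌊y + 1 / 2⌋₊ : ℝ) ≤ y + 1 / 2 := Nat.floor_le (by linarith)
  have hlt_floor : y + 1 / 2 < ⌊y + 1 / 2⌋₊ + 1 := Nat.lt_floor_add_one _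
  have hdist : |y - ⌊y + 1 / 2⌋₊| ≤ 1 / 2 := abs_le.2 ⟨by linarith, by linarith⟩
  refine ⟨⌊y + 1 / 2⌋₊, Nat.floor_pos.2 (by linarith), by nlinarith, ?_⟩
  rw [← sub_mul, abs_mul, abs_of_pos pi_pos]
  linarith [mul_le_mul_of_nonneg_right hdist pi_pos.le]

theorem Real.exists_pos_mul_rpow_le_abs_sin_natCast {k : ℝ} (hk : 1 ≤ k)
    (hfin : {pq : ℕ × ℕ | 0 < pq.1 ∧ 0 < pq.2 ∧ Nat.Coprime pq.1 pq.2 ∧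
        |π - (pq.1 : ℝ) / (pq.2 : ℝ)| < 1 / (pq.2 : ℝ) ^ k}.Finite) :
    ∃ c > 0, ∀ n : ℕ, 2 ≤ n → c * (n : ℝ) ^ (1 - k) ≤ |sin n| := by
  obtain ⟨c, hc, hc_le⟩ := irrational_pi.exists_pos_div_rpow_le_abs_sub_div (by linarith) hfin
  refine ⟨2 / π * c, by positivity, fun n hn ↦ ?_⟩
  have hn2 : (2 : ℝ) ≤ n := by exact_mod_cast hn
  obtain ⟨m, hm, hmn, hdist⟩ := exists_nat_abs_sub_mul_pi_le (x := n) (by linarith [pi_lt_four])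
  have hm' : (0 : ℝ) < m := by exact_mod_cast hm
  calc 2 / π * c * (n : ℝ) ^ (1 - k) ≤ 2 / π * (c * (m : ℝ) ^ (1 - k)) := by
        rw [mul_assoc]
        gcongr 2 / π * (c * ?_)
        exact rpow_le_rpow_of_nonpos hm' hmn (by linarith)
    _ = 2 / π * (m * (c / (m : ℝ) ^ k)) := by
        rw [rpow_sub hm', rpow_one]
        ring
    _ ≤ 2 / π * (m * |π - n / m|) := by
        gcongr
        exact hc_le n m (by omega) hm
    _ = 2 / π * |n - ((m : ℤ) : ℝ) * π| := by
        rw [Int.cast_natCast, abs_sub_comm (n : ℝ),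
          show (m : ℝ) * π - n = m * (π - n / m) by field_simp, abs_mul, abs_of_pos hm']
    _ ≤ |sin n| := two_div_pi_mul_abs_sub_int_mul_pi_le_abs_sin (by simpa using hdist)

theorem Real.one_div_rpow_mul_rpow_le {n s c a u v : ℝ} (hn : 0 < n) (hc : 0 < c)
    (hv : 0 ≤ v) (hs : c * n ^ a ≤ s) :
    1 / (n ^ u * s ^ v) ≤ c ^ (-v) * n ^ (-(u + a * v)) := by
  calc 1 / (n ^ u * s ^ v) ≤ 1 / (n ^ u * (c * n ^ a) ^ v) := by gcongr
    _ = c ^ (-v) * n ^ (-(u + a * v)) := by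
        rw [mul_rpow hc.le (by positivity), ← rpow_mul hn.le, rpow_neg hc.le, rpow_neg hn.le,
          rpow_add hn]
        field_simp

open Real in
theorem seq_bigO_general (u v ε μ : ℝ) (hv : 0 < v) (hε : 0 < ε) (hμ : 2 ≤ μ)
    (hfin : {pq : ℕ × ℕ | 0 < pq.1 ∧ 0 < pq.2 ∧ Nat.Coprime pq.1 pq.2 ∧
        |π - (pq.1 : ℝ) / (pq.2 : ℝ)| < 1 / (pq.2 : ℝ) ^ (μ + ε / v)}.Finite) :
    ∃ M : ℝ, ∃ N : ℕ, ∀ n : ℕ, N ≤ n →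
      1 / ((n : ℝ) ^ u * |Real.sin n| ^ v) ≤ M * (n : ℝ) ^ (-(u - (μ - 1) * v - ε)) := by
  have hk : 1 ≤ μ + ε / v := by linarith [div_pos hε hv]
  obtain ⟨c, hc, hc_le⟩ := exists_pos_mul_rpow_le_abs_sin_natCast hk hfin
  refine ⟨c ^ (-v), 2, fun n hn ↦ ?_⟩
  have hexp : -(u - (μ - 1) * v - ε) = -(u + (1 - (μ + ε / v)) * v) := by
    field_simp
    ring
  rw [hexp]
  exact one_div_rpow_mul_rpow_le (by positivity) hc hv.le (hc_le n hn)

open Real in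
theorem seq_bigO (u v ε μ : ℝ) (hu : 0 < u) (hv : 0 < v) (hε : 0 < ε) (hμ : 2 ≤ μ)
    (hfin : {pq : ℕ × ℕ | 0 < pq.1 ∧ 0 < pq.2 ∧ Nat.Coprime pq.1 pq.2 ∧
        |π - (pq.1 : ℝ) / (pq.2 : ℝ)| < 1 / (pq.2 : ℝ) ^ (μ + ε / v)}.Finite) :
    ∃ M : ℝ, ∃ N : ℕ, ∀ n : ℕ, N ≤ n →
      1 / ((n : ℝ) ^ u * |Real.sin n| ^ v) ≤ M * (n : ℝ) ^ (-(u - (μ - 1) * v - ε)) :=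
  seq_bigO_general u v ε μ hv hε hμ hfin
end
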